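/- arXiv:2007.05089 — 2 statements merged into one kernel-verified Lean document; each statement's English description precedes it below -/
import Mathlib

section
/- Fix N ≥ 1, λ > 0, K ≥ 0, and a label set Y. Let ℓ : ℝ^C × Y → ℝ be such that for each y, the map a ↦ ℓ(a, y) is strictly convex, differentiable, and has gradient bounded in Euclidean norm by K, and let R : ℝ^{D×C} → ℝ be 1-strongly convex and differentiable. Let D = {(x₁,y₁),…,(x_N,y_N)} and D′ be two datasets of N examples with ‖x_n‖₂ ≤ 1 for all inputs, that agree in all but one example. Define J(θ; D) = (1/N) ∑_{n=1}^N ℓ(θᵀx_n, y_n) + λ R(θ). If θ₁ minimizes J(·; D) and θ₂ minimizes J(·; D′), then ‖θ₁ − θ₂‖_F ≤ 2K/(Nλ). -/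
/-!
Both objectives are `λ`-strongly convex, so each minimizer beats the other point by a quadratic
margin: `J θ₁ + λ/2 ‖θ₁ - θ₂‖² ≤ J θ₂` and `J' θ₂ + λ/2 ‖θ₁ - θ₂‖² ≤ J' θ₁`. Adding these gives
`λ ‖θ₁ - θ₂‖² ≤ (J' - J) θ₁ - (J' - J) θ₂`. The difference `J' - J` only involves the one changed
example, and since `‖∇ℓ‖ ≤ K` and `‖x‖ ≤ 1` it is `2K/N`-Lipschitz; dividing by `λ ‖θ₁ - θ₂‖`
gives the bound.
-/

open Set

/-- The matrix–vector product `θᵀ x ∈ ℝ^C`, where `θ ∈ ℝ^{D×C}` is viewed as an element of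
the Euclidean space indexed by `Fin D × Fin C` (so its Euclidean norm is the Frobenius norm). -/
noncomputable def matVecT {D C : ℕ} (θ : EuclideanSpace ℝ (Fin D × Fin C))
    (x : EuclideanSpace ℝ (Fin D)) : EuclideanSpace ℝ (Fin C) :=
  WithLp.toLp 2 (fun c => ∑ d, θ (d, c) * x d)

lemma ConvexOn.sum {𝕜 E β ι : Type*} [Semiring 𝕜] [PartialOrder 𝕜] [AddCommMonoid E]
    [AddCommMonoid β] [PartialOrder β] [IsOrderedAddMonoid β] [SMul 𝕜 E] [Module 𝕜 β]
    {s : Set E} (hs : Convex 𝕜 s) {t : Finset ι} {f : ι → E → β}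
    (h : ∀ i ∈ t, ConvexOn 𝕜 s (f i)) : ConvexOn 𝕜 s (∑ i ∈ t, f i) :=
  Finset.sum_induction f (ConvexOn 𝕜 s) (fun _ _ => ConvexOn.add) (convexOn_const 0 hs) h

section StrongConvexity

variable {E : Type*} [NormedAddCommGroup E] [InnerProductSpace ℝ E] {s : Set E} {f g : E → ℝ}
  {m : ℝ} {z w : E}

theorem StrongConvexOn.add_sq_norm_sub_le_of_isMinOn (hf : StrongConvexOn s m f)
    (hz : IsMinOn f s z) (hzs : z ∈ s) (hws : w ∈ s) :
    f z + m / 2 * ‖z - w‖ ^ 2 ≤ f w := by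
  -- Minimality against `a • z + (1 - a) • w` gives the margin scaled by `a < 1`; let `a → 1`.
  have hIoo : Ioo (0 : ℝ) 1 ⊆ {a | f z + a * (m / 2 * ‖z - w‖ ^ 2) ≤ f w} := by
    intro a ⟨ha₀, ha₁⟩
    have hconv := hf.2 hzs hws ha₀.le (sub_nonneg.2 ha₁.le) (add_sub_cancel a 1)
    have hmin := hz (hf.1 hzs hws ha₀.le (sub_nonneg.2 ha₁.le) (add_sub_cancel a 1))
    simp only [smul_eq_mul, mem_ofPred_eq] at hconv hmin ⊢
    refine le_of_mul_le_mul_left ?_ (sub_pos.2 ha₁)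
    linarith
  have hclosed : IsClosed {a : ℝ | f z + a * (m / 2 * ‖z - w‖ ^ 2) ≤ f w} :=
    isClosed_le (by fun_prop) continuous_const
  have h₁ : (1 : ℝ) ∈ closure (Ioo 0 1) := by
    rw [closure_Ioo zero_ne_one]
    exact ⟨zero_le_one, le_rfl⟩
  simpa using hclosed.closure_subset_iff.2 hIoo h₁

theorem StrongConvexOn.norm_sub_le_of_isMinOn {z₁ z₂ : E} {B : ℝ} (hm : 0 < m) (hB : 0 ≤ B)
    (hf : StrongConvexOn s m f) (hg : StrongConvexOn s m g)
    (h₁ : IsMinOn f s z₁) (h₂ : IsMinOn g s z₂) (hz₁ : z₁ ∈ s) (hz₂ : z₂ ∈ s)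
    (hgf : g z₁ - f z₁ - (g z₂ - f z₂) ≤ B * ‖z₁ - z₂‖) :
    ‖z₁ - z₂‖ ≤ B / m := by
  have hf₁ := hf.add_sq_norm_sub_le_of_isMinOn h₁ hz₁ hz₂
  have hg₂ := hg.add_sq_norm_sub_le_of_isMinOn h₂ hz₂ hz₁
  rw [norm_sub_rev] at hg₂
  have hquad : m * ‖z₁ - z₂‖ ^ 2 ≤ B * ‖z₁ - z₂‖ := by linarith
  rw [le_div_iff₀ hm]
  rcases (norm_nonneg (z₁ - z₂)).eq_or_lt with h0 | hpos
  · rw [← h0]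
    simpa using hB
  · nlinarith

end StrongConvexity

theorem sub_le_mul_norm_sub_of_norm_gradient_le {E : Type*} [NormedAddCommGroup E]
    [InnerProductSpace ℝ E] [CompleteSpace E] {f : E → ℝ} {K : ℝ} (hf : Differentiable ℝ f)
    (hK : ∀ x, ‖gradient f x‖ ≤ K) (a b : E) : f a - f b ≤ K * ‖a - b‖ := by
  have hfderiv : ∀ x ∈ univ, ‖fderiv ℝ f x‖ ≤ K := fun x _ =>
    (InnerProductSpace.toDual ℝ E).symm.norm_map (fderiv ℝ f x) ▸ hK x
  exact (le_abs_self _).trans <| convex_univ.norm_image_sub_le_of_norm_fderiv_le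
    (fun x _ => hf x) hfderiv (mem_univ b) (mem_univ a)

section MatVecT

variable {D C : ℕ}

noncomputable def matVecTLinearMap (x : EuclideanSpace ℝ (Fin D)) :
    EuclideanSpace ℝ (Fin D × Fin C) →ₗ[ℝ] EuclideanSpace ℝ (Fin C) where
  toFun θ := matVecT θ x
  map_add' θ₁ θ₂ := by
    ext c
    simp [matVecT, add_mul, Finset.sum_add_distrib]
  map_smul' r θ := by
    ext c
    simp [matVecT, Finset.mul_sum, mul_assoc]

theorem matVecT_sub (θ₁ θ₂ : EuclideanSpace ℝ (Fin D × Fin C)) (x : EuclideanSpace ℝ (Fin D)) :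
    matVecT (θ₁ - θ₂) x = matVecT θ₁ x - matVecT θ₂ x :=
  (matVecTLinearMap x).map_sub θ₁ θ₂

theorem norm_matVecT_le (θ : EuclideanSpace ℝ (Fin D × Fin C)) (x : EuclideanSpace ℝ (Fin D)) :
    ‖matVecT θ x‖ ≤ ‖θ‖ * ‖x‖ := by
  have hsq : ‖matVecT θ x‖ ^ 2 ≤ (‖θ‖ * ‖x‖) ^ 2 := by
    simp only [mul_pow, EuclideanSpace.norm_sq_eq, matVecT, Real.norm_eq_abs, sq_abs,
      Fintype.sum_prod_type]
    calc ∑ c, (∑ d, θ (d, c) * x d) ^ 2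
        ≤ ∑ c, (∑ d, θ (d, c) ^ 2) * ∑ d, x d ^ 2 :=
          Finset.sum_le_sum fun c _ => Finset.sum_mul_sq_le_sq_mul_sq _ _ _
      _ = (∑ d, ∑ c, θ (d, c) ^ 2) * ∑ d, x d ^ 2 := by
          rw [← Finset.sum_mul, Finset.sum_comm]
  exact (pow_le_pow_iff_left₀ (norm_nonneg _) (by positivity) two_ne_zero).1 hsq

theorem sub_le_mul_norm_sub_of_norm_le_one {f : EuclideanSpace ℝ (Fin C) → ℝ} {K : ℝ}
    (hf : Differentiable ℝ f) (hK : ∀ a, ‖gradient f a‖ ≤ K) {x : EuclideanSpace ℝ (Fin D)}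
    (hx : ‖x‖ ≤ 1) (θ₁ θ₂ : EuclideanSpace ℝ (Fin D × Fin C)) :
    f (matVecT θ₁ x) - f (matVecT θ₂ x) ≤ K * ‖θ₁ - θ₂‖ := by
  have hK₀ : 0 ≤ K := (norm_nonneg _).trans (hK 0)
  calc f (matVecT θ₁ x) - f (matVecT θ₂ x)
      ≤ K * ‖matVecT (θ₁ - θ₂) x‖ := by
        rw [matVecT_sub]
        exact sub_le_mul_norm_sub_of_norm_gradient_le hf hK _ _
    _ ≤ K * (‖θ₁ - θ₂‖ * 1) := by
        gcongr
        exact (norm_matVecT_le _ _).trans (by gcongr)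
    _ = K * ‖θ₁ - θ₂‖ := by rw [mul_one]

end MatVecT

section RegularizedRisk

variable {D C N : ℕ} {Y : Type*}

noncomputable def regularizedRisk (ℓ : EuclideanSpace ℝ (Fin C) → Y → ℝ)
    (R : EuclideanSpace ℝ (Fin D × Fin C) → ℝ) (lam : ℝ) (x : Fin N → EuclideanSpace ℝ (Fin D))
    (y : Fin N → Y) (θ : EuclideanSpace ℝ (Fin D × Fin C)) : ℝ :=
  (1 / (N : ℝ)) * ∑ n, ℓ (matVecT θ (x n)) (y n) + lam * R θ

variable {ℓ : EuclideanSpace ℝ (Fin C) → Y → ℝ} {R : EuclideanSpace ℝ (Fin D × Fin C) → ℝ}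
  {lam : ℝ}

theorem strongConvexOn_regularizedRisk (hℓ : ∀ y, ConvexOn ℝ univ (fun a => ℓ a y))
    (hR : ConvexOn ℝ univ (fun θ => R θ - 1 / 2 * ‖θ‖ ^ 2)) (hlam : 0 ≤ lam)
    (x : Fin N → EuclideanSpace ℝ (Fin D)) (y : Fin N → Y) :
    StrongConvexOn univ lam (regularizedRisk ℓ R lam x y) := by
  rw [strongConvexOn_iff_convex]
  have hsum : ConvexOn ℝ univ (∑ n, fun θ => ℓ (matVecT θ (x n)) (y n)) :=
    ConvexOn.sum convex_univ fun n _ => (hℓ (y n)).comp_linearMap (matVecTLinearMap (x n))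
  refine ((hsum.smul (c := 1 / (N : ℝ)) (by positivity)).add (hR.smul hlam)).congr fun θ _ => ?_
  simp only [regularizedRisk, Pi.add_apply, Finset.sum_apply, smul_eq_mul]
  ring

theorem regularizedRisk_sub_regularizedRisk {x x' : Fin N → EuclideanSpace ℝ (Fin D)}
    {y y' : Fin N → Y} {n₀ : Fin N} (h : ∀ n, n ≠ n₀ → x n = x' n ∧ y n = y' n)
    (θ : EuclideanSpace ℝ (Fin D × Fin C)) :
    regularizedRisk ℓ R lam x' y' θ - regularizedRisk ℓ R lam x y θ
      = 1 / (N : ℝ) * (ℓ (matVecT θ (x' n₀)) (y' n₀) - ℓ (matVecT θ (x n₀)) (y n₀)) := by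
  have hsum : ∑ n, (ℓ (matVecT θ (x' n)) (y' n) - ℓ (matVecT θ (x n)) (y n))
      = ℓ (matVecT θ (x' n₀)) (y' n₀) - ℓ (matVecT θ (x n₀)) (y n₀) :=
    Finset.sum_eq_single_of_mem n₀ (Finset.mem_univ n₀) fun n _ hn => by
      rw [(h n hn).1, (h n hn).2, sub_self]
  rw [regularizedRisk, regularizedRisk, ← hsum, Finset.sum_sub_distrib]
  ring

end RegularizedRisk

theorem erm_sensitivity_bound_general {D C : ℕ} {Y : Type*} (N : ℕ)
    (lam K : ℝ) (hlam : 0 < lam)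
    (ℓ : EuclideanSpace ℝ (Fin C) → Y → ℝ)
    (hconv : ∀ y, StrictConvexOn ℝ Set.univ (fun a => ℓ a y))
    (hdiff : ∀ y, Differentiable ℝ (fun a => ℓ a y))
    (hgrad : ∀ y a, ‖gradient (fun a => ℓ a y) a‖ ≤ K)
    (R : EuclideanSpace ℝ (Fin D × Fin C) → ℝ)
    (hRconv : ConvexOn ℝ Set.univ (fun θ => R θ - 1 / 2 * ‖θ‖ ^ 2))
    (x x' : Fin N → EuclideanSpace ℝ (Fin D)) (y y' : Fin N → Y)
    (hx : ∀ n, ‖x n‖ ≤ 1) (hx' : ∀ n, ‖x' n‖ ≤ 1)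
    (hdiffer : ∃ n₀, ∀ n, n ≠ n₀ → x n = x' n ∧ y n = y' n)
    (J J' : EuclideanSpace ℝ (Fin D × Fin C) → ℝ)
    (hJ : ∀ θ, J θ = (1 / (N : ℝ)) * ∑ n, ℓ (matVecT θ (x n)) (y n) + lam * R θ)
    (hJ' : ∀ θ, J' θ = (1 / (N : ℝ)) * ∑ n, ℓ (matVecT θ (x' n)) (y' n) + lam * R θ)
    (θ₁ θ₂ : EuclideanSpace ℝ (Fin D × Fin C))
    (hθ₁ : ∀ θ, J θ₁ ≤ J θ) (hθ₂ : ∀ θ, J' θ₂ ≤ J' θ) :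
    ‖θ₁ - θ₂‖ ≤ 2 * K / (N * lam) := by
  obtain ⟨n₀, hn₀⟩ := hdiffer
  obtain rfl : J = regularizedRisk ℓ R lam x y := funext hJ
  obtain rfl : J' = regularizedRisk ℓ R lam x' y' := funext hJ'
  have hK : 0 ≤ K := (norm_nonneg _).trans (hgrad (y n₀) 0)
  have hSC : ∀ (x : Fin N → _) y, StrongConvexOn univ lam (regularizedRisk ℓ R lam x y) :=
    strongConvexOn_regularizedRisk (fun y => (hconv y).convexOn) hRconv hlam.le
  have hlip₁ := sub_le_mul_norm_sub_of_norm_le_one (hdiff (y' n₀)) (hgrad _) (hx' n₀) θ₁ θ₂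
  have hlip₂ := sub_le_mul_norm_sub_of_norm_le_one (hdiff (y n₀)) (hgrad _) (hx n₀) θ₂ θ₁
  rw [norm_sub_rev] at hlip₂
  have hdiff_risk : regularizedRisk ℓ R lam x' y' θ₁ - regularizedRisk ℓ R lam x y θ₁
      - (regularizedRisk ℓ R lam x' y' θ₂ - regularizedRisk ℓ R lam x y θ₂)
      ≤ 2 * K / N * ‖θ₁ - θ₂‖ := by
    rw [regularizedRisk_sub_regularizedRisk hn₀, regularizedRisk_sub_regularizedRisk hn₀]
    calc _ = 1 / (N : ℝ) * ((ℓ (matVecT θ₁ (x' n₀)) (y' n₀) - ℓ (matVecT θ₂ (x' n₀)) (y' n₀))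
            + (ℓ (matVecT θ₂ (x n₀)) (y n₀) - ℓ (matVecT θ₁ (x n₀)) (y n₀))) := by ring
      _ ≤ 1 / (N : ℝ) * (K * ‖θ₁ - θ₂‖ + K * ‖θ₁ - θ₂‖) := by gcongr
      _ = 2 * K / N * ‖θ₁ - θ₂‖ := by ring
  rw [← div_div]
  exact (hSC x y).norm_sub_le_of_isMinOn hlam (by positivity) (hSC x' y')
    (fun θ _ => hθ₁ θ) (fun θ _ => hθ₂ θ) (mem_univ _) (mem_univ _) hdiff_risk

/-- Lemma 1 of the paper: the minimizers of the regularized empirical risks on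
two datasets differing in a single example satisfy `‖θ₁ - θ₂‖_F ≤ 2K/(Nλ)`. -/
theorem erm_sensitivity_bound {D C : ℕ} {Y : Type*} (N : ℕ) (hN : 1 ≤ N)
    (lam K : ℝ) (hlam : 0 < lam) (hK : 0 ≤ K)
    (ℓ : EuclideanSpace ℝ (Fin C) → Y → ℝ)
    (hconv : ∀ y, StrictConvexOn ℝ Set.univ (fun a => ℓ a y))
    (hdiff : ∀ y, Differentiable ℝ (fun a => ℓ a y))
    (hgrad : ∀ y a, ‖gradient (fun a => ℓ a y) a‖ ≤ K)
    (R : EuclideanSpace ℝ (Fin D × Fin C) → ℝ)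
    (hRconv : ConvexOn ℝ Set.univ (fun θ => R θ - 1 / 2 * ‖θ‖ ^ 2))
    (hRdiff : Differentiable ℝ R)
    (x x' : Fin N → EuclideanSpace ℝ (Fin D)) (y y' : Fin N → Y)
    (hx : ∀ n, ‖x n‖ ≤ 1) (hx' : ∀ n, ‖x' n‖ ≤ 1)
    (hdiffer : ∃ n₀, ∀ n, n ≠ n₀ → x n = x' n ∧ y n = y' n)
    (J J' : EuclideanSpace ℝ (Fin D × Fin C) → ℝ)
    (hJ : ∀ θ, J θ = (1 / (N : ℝ)) * ∑ n, ℓ (matVecT θ (x n)) (y n) + lam * R θ)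
    (hJ' : ∀ θ, J' θ = (1 / (N : ℝ)) * ∑ n, ℓ (matVecT θ (x' n)) (y' n) + lam * R θ)
    (θ₁ θ₂ : EuclideanSpace ℝ (Fin D × Fin C))
    (hθ₁ : ∀ θ, J θ₁ ≤ J θ) (hθ₂ : ∀ θ, J' θ₂ ≤ J' θ) :
    ‖θ₁ - θ₂‖ ≤ 2 * K / (N * lam) :=
  erm_sensitivity_bound_general N lam K hlam ℓ hconv hdiff hgrad R hRconv x x' y y' hx hx' hdiffer J
    J' hJ hJ' θ₁ θ₂ hθ₁ hθ₂
end

section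
/- Let E be a finite-dimensional real inner product space, λ > 0, and let G : E → ℝ be differentiable and λ-strongly convex with minimizer θ₁, and let g : E → ℝ be differentiable and convex such that G + g has minimizer θ₂. Then ∇G(θ₂) = −∇g(θ₂) and λ‖θ₁ − θ₂‖² ≤ ⟨∇G(θ₂) − ∇G(θ₁), θ₂ − θ₁⟩ = ⟨−∇g(θ₂), θ₂ − θ₁⟩ ≤ ‖∇g(θ₂)‖·‖θ₁ − θ₂‖, whence ‖θ₁ − θ₂‖ ≤ ‖∇g(θ₂)‖ / λ. -/
open scoped RealInnerProductSpace Gradient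

section FirstOrder

variable {E : Type*} [NormedAddCommGroup E] [NormedSpace ℝ E] {s : Set E} {f : E → ℝ} {x y : E}

theorem ConvexOn.fderiv_apply_sub_le (hf : ConvexOn ℝ s f) (hx : x ∈ s) (hy : y ∈ s)
    (hfx : DifferentiableAt ℝ f x) : fderiv ℝ f x (y - x) ≤ f y - f x := by
  let ℓ : ℝ →ᵃ[ℝ] E := AffineMap.lineMap x y
  have hline : HasDerivAt (f ∘ ℓ) (fderiv ℝ f x (y - x)) 0 :=
    hfx.hasFDerivAt.comp_hasDerivAt_of_eq 0 AffineMap.hasDerivAt_lineMap (by simp [ℓ])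
  have hℓ₀ : ℓ 0 = x := AffineMap.lineMap_apply_zero x y
  have hℓ₁ : ℓ 1 = y := AffineMap.lineMap_apply_one x y
  have hslope := (hf.comp_affineMap ℓ).le_slope_of_hasDerivAt
    (x := 0) (y := 1) (by simpa [hℓ₀]) (by simpa [hℓ₁]) one_pos hline
  simpa [slope, hℓ₀, hℓ₁] using hslope

theorem ConvexOn.fderiv_apply_sub_le_fderiv_apply_sub (hf : ConvexOn ℝ s f) (hx : x ∈ s)
    (hy : y ∈ s) (hfx : DifferentiableAt ℝ f x) (hfy : DifferentiableAt ℝ f y) :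
    fderiv ℝ f x (y - x) ≤ fderiv ℝ f y (y - x) := by
  have hxy := hf.fderiv_apply_sub_le hx hy hfx
  have hyx := hf.fderiv_apply_sub_le hy hx hfy
  rw [← neg_sub, map_neg] at hyx
  linarith

end FirstOrder

section Gradient

variable {E : Type*} [NormedAddCommGroup E] [InnerProductSpace ℝ E] [CompleteSpace E]
  {s : Set E} {f g : E → ℝ} {x y : E} {m : ℝ}

theorem IsLocalMin.gradient_eq_zero (h : IsLocalMin f x) : ∇ f x = 0 := by
  simp [gradient, h.fderiv_eq_zero]

theorem gradient_eq_neg_of_isLocalMin_add (hf : DifferentiableAt ℝ f x)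
    (hg : DifferentiableAt ℝ g x) (h : IsLocalMin (fun z => f z + g z) x) :
    ∇ f x = -∇ g x := by
  have hsum : HasGradientAt (fun z => f z + g z) (∇ f x + ∇ g x) x := by
    rw [hasGradientAt_iff_hasFDerivAt, map_add, toDual_gradient, toDual_gradient]
    exact hf.hasFDerivAt.add hg.hasFDerivAt
  exact eq_neg_of_add_eq_zero_left (hsum.gradient ▸ h.gradient_eq_zero)

theorem StrongConvexOn.mul_norm_sub_sq_le_inner_gradient_sub_gradient
    (hf : StrongConvexOn s m f) (hx : x ∈ s) (hy : y ∈ s)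
    (hfx : DifferentiableAt ℝ f x) (hfy : DifferentiableAt ℝ f y) :
    m * ‖y - x‖ ^ 2 ≤ ⟪∇ f y - ∇ f x, y - x⟫ := by
  have hshift : ∀ z, DifferentiableAt ℝ f z → HasFDerivAt (fun z => f z - m / 2 * ‖z‖ ^ 2)
      (fderiv ℝ f z - (m / 2) • (2 • innerSL ℝ z)) z := fun z hfz =>
    hfz.hasFDerivAt.sub ((hasStrictFDerivAt_norm_sq z).hasFDerivAt.const_mul (m / 2))
  have hmono := (strongConvexOn_iff_convex.1 hf).fderiv_apply_sub_le_fderiv_apply_sub hx hy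
    (hshift x hfx).differentiableAt (hshift y hfy).differentiableAt
  rw [(hshift x hfx).fderiv, (hshift y hfy).fderiv] at hmono
  simp only [sub_apply, smul_apply, innerSL_apply_apply, smul_eq_mul, nsmul_eq_mul, Nat.cast_ofNat] at hmono
  have hnorm : ‖y - x‖ ^ 2 = ⟪y, y - x⟫ - ⟪x, y - x⟫ := by
    rw [← inner_sub_left, real_inner_self_eq_norm_sq]
  rw [inner_sub_left, inner_gradient_left, inner_gradient_left, hnorm]
  linarith

end Gradient

theorem le_div_of_mul_sq_le_mul {a b c : ℝ} (ha : 0 < a) (hb : 0 ≤ b) (hc : 0 ≤ c)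
    (h : a * b ^ 2 ≤ c * b) : b ≤ c / a := by
  rcases hb.eq_or_lt with rfl | hb
  · positivity
  · rw [le_div_iff₀ ha]
    nlinarith

theorem strong_convexity_sensitivity_chain_general
    {E : Type*} [NormedAddCommGroup E] [InnerProductSpace ℝ E] [FiniteDimensional ℝ E]
    (lam : ℝ) (hlam : 0 < lam)
    (G g : E → ℝ) (hG : Differentiable ℝ G) (hg : Differentiable ℝ g)
    (hGsc : ConvexOn ℝ Set.univ (fun θ => G θ - lam / 2 * ‖θ‖ ^ 2))
    (θ₁ θ₂ : E)
    (hθ₁ : ∀ θ, G θ₁ ≤ G θ)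
    (hθ₂ : ∀ θ, G θ₂ + g θ₂ ≤ G θ + g θ) :
    gradient G θ₂ = -gradient g θ₂ ∧
    lam * ‖θ₁ - θ₂‖ ^ 2 ≤ ⟪gradient G θ₂ - gradient G θ₁, θ₂ - θ₁⟫ ∧
    ⟪gradient G θ₂ - gradient G θ₁, θ₂ - θ₁⟫ = ⟪-gradient g θ₂, θ₂ - θ₁⟫ ∧
    ⟪-gradient g θ₂, θ₂ - θ₁⟫ ≤ ‖gradient g θ₂‖ * ‖θ₁ - θ₂‖ ∧
    ‖θ₁ - θ₂‖ ≤ ‖gradient g θ₂‖ / lam := by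
  have hcrit₁ : ∇ G θ₁ = 0 := IsLocalMin.gradient_eq_zero (.of_forall hθ₁)
  have hcrit₂ : ∇ G θ₂ = -∇ g θ₂ :=
    gradient_eq_neg_of_isLocalMin_add (hG θ₂) (hg θ₂) (.of_forall hθ₂)
  have hstrong : lam * ‖θ₁ - θ₂‖ ^ 2 ≤ ⟪∇ G θ₂ - ∇ G θ₁, θ₂ - θ₁⟫ := by
    rw [norm_sub_rev]
    exact (strongConvexOn_iff_convex.2 hGsc).mul_norm_sub_sq_le_inner_gradient_sub_gradient
      (Set.mem_univ θ₁) (Set.mem_univ θ₂) (hG θ₁) (hG θ₂)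
  have hsubst : ⟪∇ G θ₂ - ∇ G θ₁, θ₂ - θ₁⟫ = ⟪-∇ g θ₂, θ₂ - θ₁⟫ := by
    rw [hcrit₁, sub_zero, hcrit₂]
  have hcauchy : ⟪-∇ g θ₂, θ₂ - θ₁⟫ ≤ ‖∇ g θ₂‖ * ‖θ₁ - θ₂‖ := by
    simpa [norm_sub_rev] using real_inner_le_norm (-∇ g θ₂) (θ₂ - θ₁)
  refine ⟨hcrit₂, hstrong, hsubst, hcauchy, ?_⟩
  exact le_div_of_mul_sq_le_mul hlam (norm_nonneg _) (norm_nonneg _)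
    ((hstrong.trans_eq hsubst).trans hcauchy)

/-- the chain of inequalities behind the sensitivity bound. With `G`
`λ`-strongly convex minimized at `θ₁` and `G + g` minimized at `θ₂` (`g` convex), one has
`∇G(θ₂) = -∇g(θ₂)`,
`λ‖θ₁ - θ₂‖² ≤ ⟨∇G(θ₂) - ∇G(θ₁), θ₂ - θ₁⟩ = ⟨-∇g(θ₂), θ₂ - θ₁⟩ ≤ ‖∇g(θ₂)‖·‖θ₁ - θ₂‖`,
whence `‖θ₁ - θ₂‖ ≤ ‖∇g(θ₂)‖/λ`. -/
theorem strong_convexity_sensitivity_chain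
    {E : Type*} [NormedAddCommGroup E] [InnerProductSpace ℝ E] [FiniteDimensional ℝ E]
    (lam : ℝ) (hlam : 0 < lam)
    (G g : E → ℝ) (hG : Differentiable ℝ G) (hg : Differentiable ℝ g)
    (hGsc : ConvexOn ℝ Set.univ (fun θ => G θ - lam / 2 * ‖θ‖ ^ 2))
    (hgconv : ConvexOn ℝ Set.univ g)
    (θ₁ θ₂ : E)
    (hθ₁ : ∀ θ, G θ₁ ≤ G θ)
    (hθ₂ : ∀ θ, G θ₂ + g θ₂ ≤ G θ + g θ) :
    gradient G θ₂ = -gradient g θ₂ ∧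
    lam * ‖θ₁ - θ₂‖ ^ 2 ≤ ⟪gradient G θ₂ - gradient G θ₁, θ₂ - θ₁⟫ ∧
    ⟪gradient G θ₂ - gradient G θ₁, θ₂ - θ₁⟫ = ⟪-gradient g θ₂, θ₂ - θ₁⟫ ∧
    ⟪-gradient g θ₂, θ₂ - θ₁⟫ ≤ ‖gradient g θ₂‖ * ‖θ₁ - θ₂‖ ∧
    ‖θ₁ - θ₂‖ ≤ ‖gradient g θ₂‖ / lam :=
  strong_convexity_sensitivity_chain_general lam hlam G g hG hg hGsc θ₁ θ₂ hθ₁ hθ₂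
end
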